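/- The vertex set is finite: if Λ ⊂ V is a full-rank lattice and Φ a finite list of nonzero vectors of Λ spanning V, then the set 𝒱(Φ) of points s of the torus T = Hom(Λ, U(1)) such that Φ_s = [α ∈ Φ : s^α = 1] spans V is finite. -/

import Mathlib

/-!
A character `s` in the vertex set is trivial on a subfamily `Φ_I` of `Φ` that spans `V`. The
`ℤ`-span of `Φ_I` is then a sublattice of `Λ` of full rank, hence of finite index, so `s` factors
through the finite group `Λ / ⟨Φ_I⟩`, which has only finitely many characters. There are finitely
many subfamilies `I`.
-/

open Submodule Module

namespace AddChar

variable {G M : Type*} [AddCommGroup G] [CommGroup M]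

lemma mem_ker_toAddMonoidHom {s : AddChar G M} {x : G} :
    x ∈ (toAddMonoidHom s).ker ↔ s x = 1 :=
  AddMonoidHom.mem_ker.trans ofMul_eq_zero

lemma forall_mem_closure_eq_one {s : AddChar G M} {S : Set G} (hS : ∀ x ∈ S, s x = 1) :
    ∀ x ∈ AddSubgroup.closure S, s x = 1 := fun _ hx =>
  mem_ker_toAddMonoidHom.mp <|
    (AddSubgroup.closure_le _).mpr (fun x hx => mem_ker_toAddMonoidHom.mpr (hS x hx)) hx

lemma finite_setOf_forall_eq_one_of_finite_quotient (H : AddSubgroup G) [Finite (G ⧸ H)] :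
    {s : AddChar G Circle | ∀ x ∈ H, s x = 1}.Finite := by
  let descend (s : {s : AddChar G Circle // ∀ x ∈ H, s x = 1}) : AddChar (G ⧸ H) ℂ :=
    Circle.coeHom.compAddChar <| toAddMonoidHomEquiv.symm <|
      QuotientAddGroup.lift H (toAddMonoidHom s.1) fun x hx =>
        mem_ker_toAddMonoidHom.mpr (s.2 x hx)
  have h_inj : Function.Injective descend := by
    intro s t hst
    ext x
    exact congr($hst (x : G ⧸ H))
  -- `AddChar (G ⧸ H) ℂ` is finite: characters of a finite group are linearly independent.
  exact Set.finite_coe_iff.mp (Finite.of_injective descend h_inj)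

end AddChar

lemma ZLattice.finite_quotient_span_of_span_real_eq_top {V : Type*} [NormedAddCommGroup V]
    [NormedSpace ℝ V] [FiniteDimensional ℝ V] (Λ : Submodule ℤ V) [DiscreteTopology Λ]
    [IsZLattice ℝ Λ] {S : Set Λ} (hS : span ℝ ((↑) '' S : Set V) = ⊤) :
    Finite (Λ ⧸ span ℤ S) := by
  set L := span ℤ ((↑) '' S : Set V)
  have hL : L = (span ℤ S).map Λ.subtype := by rw [map_span]; rfl
  have hLΛ : L ≤ Λ := span_le.mpr (Set.image_subset_iff.mpr fun x _ => x.2)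
  have : DiscreteTopology L := DiscreteTopology.of_subset (s := (Λ : Set V)) ‹_› hLΛ
  have : IsZLattice ℝ L := ⟨by rw [span_span_of_tower, hS]⟩
  refine finiteQuotientOfFreeOfRankEq _ ?_
  calc finrank ℤ (span ℤ S) = finrank ℤ L := by
        rw [hL]; exact (equivMapOfInjective _ Λ.injective_subtype _).finrank_eq
    _ = finrank ℤ Λ := by rw [ZLattice.rank ℝ L, ZLattice.rank ℝ Λ]

theorem vertex_set_finite_general
    {V : Type*} [NormedAddCommGroup V] [NormedSpace ℝ V] [FiniteDimensional ℝ V]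
    (Λ : Submodule ℤ V) [DiscreteTopology Λ] [IsZLattice ℝ Λ]
    {N : ℕ} (α : Fin N → V) (hΛ : ∀ j, α j ∈ Λ) :
    {s : AddChar Λ Circle |
      Submodule.span ℝ {v : V | ∃ j, v = α j ∧ s ⟨α j, hΛ j⟩ = 1} = ⊤}.Finite := by
  let β (j : Fin N) : Λ := ⟨α j, hΛ j⟩
  have h_cover : {s : AddChar Λ Circle |
      Submodule.span ℝ {v : V | ∃ j, v = α j ∧ s ⟨α j, hΛ j⟩ = 1} = ⊤} ⊆
      ⋃ I ∈ {I : Set (Fin N) | span ℝ (α '' I) = ⊤}, {s | ∀ x ∈ β '' I, s x = 1} := by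
    intro s (hs : span ℝ _ = ⊤)
    refine Set.mem_biUnion (x := {j | s (β j) = 1}) ?_ ?_
    · show span ℝ (α '' {j | s (β j) = 1}) = ⊤
      convert hs using 2
      ext v
      simp [β, eq_comm, and_comm]
    · rintro _ ⟨j, hj, rfl⟩
      exact hj
  refine ((Set.toFinite _).biUnion fun I hI => ?_).subset h_cover
  have : Finite (Λ ⧸ AddSubgroup.closure (β '' I)) := by
    rw [← span_int_eq_addSubgroupClosure]
    exact ZLattice.finite_quotient_span_of_span_real_eq_top Λ (by rwa [Set.image_image])
  exact (AddChar.finite_setOf_forall_eq_one_of_finite_quotient _).subset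
    fun s hs => AddChar.forall_mem_closure_eq_one hs

/-- the vertex set is finite: for a full-rank lattice `Λ ⊂ V` and a finite
list `Φ` of nonzero lattice vectors spanning `V`, the set of characters `s` of `Λ` such
that `Φ_s = [α ∈ Φ : s^α = 1]` spans `V` is finite. -/
theorem vertex_set_finite
    {V : Type*} [NormedAddCommGroup V] [NormedSpace ℝ V] [FiniteDimensional ℝ V]
    (Λ : Submodule ℤ V) [DiscreteTopology Λ] [IsZLattice ℝ Λ]
    {N : ℕ} (α : Fin N → V) (hα0 : ∀ j, α j ≠ 0) (hΛ : ∀ j, α j ∈ Λ)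
    (hspan : Submodule.span ℝ (Set.range α) = ⊤) :
    {s : AddChar Λ Circle |
      Submodule.span ℝ {v : V | ∃ j, v = α j ∧ s ⟨α j, hΛ j⟩ = 1} = ⊤}.Finite :=
  vertex_set_finite_general Λ α hΛ
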